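/- arXiv:2201.01539 — 3 statements merged into one kernel-verified Lean document; each statement's English description precedes it below -/
import Mathlib

section
/- Let n, p be positive integers and σ̄, γ̄, h̄, β̄, r̂ > 0. Let Σ ∈ ℝ^{n×n} be symmetric positive semidefinite with Σ ⪯ σ̄I_n, U ∈ ℝ^{n×n} with ‖U‖ ≤ γ̄, H ∈ ℝ^{p×n} with ‖H‖ ≤ h̄, D ∈ ℝ^{p×p} diagonal with ‖D‖ ≤ β̄, and R̂ ∈ ℝ^{p×p} symmetric with r̂I_p ⪯ R̂. Then the matrix D H Σ H^T D + R̂ is invertible, and the gain matrix K := Σ U H^T D (D H Σ H^T D + R̂)^{−1} satisfies ‖K‖ ≤ σ̄γ̄h̄β̄ / r̂. -/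
/-!
`specNorm` is definitionally the L2 operator norm of `Matrix.Norms.L2Operator`, which is
submultiplicative, so `‖K‖ ≤ ‖Σ‖ ‖U‖ ‖Hᵀ‖ ‖D‖ ‖M⁻¹‖` with `M = D H Σ Hᵀ D + R̂`.
From `0 ⪯ Σ ⪯ σ̄ I` the Rayleigh quotient of `Σ` lies in `[0, σ̄]`, whence `‖Σ‖ ≤ σ̄`.
As `D` is symmetric, `D H Σ Hᵀ D = (D H) Σ (D H)ᵀ ⪰ 0`, so `M ⪰ R̂ ⪰ r̂ I`; then `M` is positive
definite and `r̂ ‖y‖² ≤ ⟨M y, y⟩ ≤ ‖M y‖ ‖y‖` gives `‖M⁻¹‖ ≤ 1 / r̂`.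
-/

open Matrix

/-- The spectral norm of a real matrix: the operator norm of the induced linear map
between Euclidean spaces. -/
noncomputable def specNorm {m n : ℕ} (A : Matrix (Fin m) (Fin n) ℝ) : ℝ :=
  ‖LinearMap.toContinuousLinearMap (Matrix.toEuclideanLin A)‖


open scoped Matrix.Norms.L2Operator RealInnerProductSpace

namespace ContinuousLinearMap

variable {E : Type*} [NormedAddCommGroup E] [InnerProductSpace ℝ E]

theorem norm_le_of_forall_inner_map_self_le {T : E →L[ℝ] E} (hT : (T : E →ₗ[ℝ] E).IsSymmetric)
    {c : ℝ} (hc : 0 ≤ c) (h₀ : ∀ x, 0 ≤ ⟪T x, x⟫) (h : ∀ x, ⟪T x, x⟫ ≤ c * ‖x‖ ^ 2) :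
    ‖T‖ ≤ c := by
  rw [T.norm_eq_iSup_rayleighQuotient hT]
  refine ciSup_le fun x => ?_
  rw [rayleighQuotient, reApplyInnerSelf_apply, RCLike.re_to_real, abs_div, abs_sq,
    abs_of_nonneg (h₀ x)]
  rcases eq_or_ne x 0 with rfl | hx
  · simpa
  · rw [div_le_iff₀ (by positivity)]
    exact h x

theorem mul_norm_le_norm_apply_of_forall_le_inner {T : E →L[ℝ] E} {r : ℝ}
    (h : ∀ x, r * ‖x‖ ^ 2 ≤ ⟪T x, x⟫) (x : E) : r * ‖x‖ ≤ ‖T x‖ := by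
  rcases eq_or_ne x 0 with rfl | hx
  · simp
  have hr : r * ‖x‖ * ‖x‖ ≤ ‖T x‖ * ‖x‖ := by
    rw [mul_assoc, ← sq]
    exact (h x).trans (real_inner_le_norm _ _)
  exact le_of_mul_le_mul_right hr (norm_pos_iff.mpr hx)

end ContinuousLinearMap

namespace Matrix

theorem PosDef.of_posSemidef_sub_smul_one {ι : Type*} [DecidableEq ι] {M : Matrix ι ι ℝ}
    {r : ℝ} (hr : 0 < r) (h : (M - r • 1).PosSemidef) : M.PosDef := by
  simpa using (PosDef.one.smul hr).add_posSemidef h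

variable {ι : Type*} [Fintype ι] [DecidableEq ι]

theorem PosSemidef.inner_toEuclideanCLM_self_nonneg {A : Matrix ι ι ℝ} (hA : A.PosSemidef)
    (x : EuclideanSpace ℝ ι) : 0 ≤ ⟪toEuclideanCLM (𝕜 := ℝ) A x, x⟫ :=
  (isPositive_toEuclideanLin_iff.mpr hA).inner_nonneg_left x

theorem inner_toEuclideanCLM_self_le_of_posSemidef_sub {A B : Matrix ι ι ℝ}
    (h : (B - A).PosSemidef) (x : EuclideanSpace ℝ ι) :
    ⟪toEuclideanCLM (𝕜 := ℝ) A x, x⟫ ≤ ⟪toEuclideanCLM (𝕜 := ℝ) B x, x⟫ := by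
  have := h.inner_toEuclideanCLM_self_nonneg x
  rwa [map_sub, _root_.sub_apply, inner_sub_left, sub_nonneg] at this

theorem inner_toEuclideanCLM_smul_one_self (c : ℝ) (x : EuclideanSpace ℝ ι) :
    ⟪toEuclideanCLM (𝕜 := ℝ) (c • 1) x, x⟫ = c * ‖x‖ ^ 2 := by
  rw [map_smul, map_one, _root_.smul_apply, one_apply_eq_self, real_inner_smul_left,
    real_inner_self_eq_norm_sq]

theorem l2_opNorm_le_of_posSemidef_smul_one_sub {A : Matrix ι ι ℝ} {c : ℝ} (hc : 0 ≤ c)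
    (hA : A.PosSemidef) (hAc : (c • 1 - A).PosSemidef) : ‖A‖ ≤ c :=
  (toEuclideanCLM (𝕜 := ℝ) A).norm_le_of_forall_inner_map_self_le
    (isSymmetric_toEuclideanLin_iff.mpr hA.isHermitian) hc hA.inner_toEuclideanCLM_self_nonneg
    fun x => (inner_toEuclideanCLM_self_le_of_posSemidef_sub hAc x).trans_eq
      (inner_toEuclideanCLM_smul_one_self c x)

theorem l2_opNorm_inv_le_of_posSemidef_sub_smul_one {M : Matrix ι ι ℝ} {r : ℝ} (hr : 0 < r)
    (h : (M - r • 1).PosSemidef) : ‖M⁻¹‖ ≤ r⁻¹ := by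
  have hdet : IsUnit M.det :=
    (isUnit_iff_isUnit_det M).mp (PosDef.of_posSemidef_sub_smul_one hr h).isUnit
  refine (toEuclideanCLM (𝕜 := ℝ) M⁻¹).opNorm_le_bound (by positivity) fun x => ?_
  have hcoercive (y : EuclideanSpace ℝ ι) : r * ‖y‖ ^ 2 ≤ ⟪toEuclideanCLM (𝕜 := ℝ) M y, y⟫ :=
    (inner_toEuclideanCLM_smul_one_self r y).symm.trans_le
      (inner_toEuclideanCLM_self_le_of_posSemidef_sub h y)
  have hinv : toEuclideanCLM (𝕜 := ℝ) M (toEuclideanCLM (𝕜 := ℝ) M⁻¹ x) = x := by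
    rw [← mul_apply_eq_comp, ← map_mul, mul_nonsing_inv M hdet, map_one, one_apply_eq_self]
  have := (toEuclideanCLM (𝕜 := ℝ) M).mul_norm_le_norm_apply_of_forall_le_inner hcoercive
    (toEuclideanCLM (𝕜 := ℝ) M⁻¹ x)
  rwa [hinv, ← le_div_iff₀' hr, ← inv_mul_eq_div] at this

end Matrix

theorem gain_matrix_bound_general {n p : ℕ}
    (σb γb hb βb rhat : ℝ)
    (hσb : 0 < σb) (hγb : 0 < γb) (hhb : 0 < hb) (hβb : 0 < βb) (hrhat : 0 < rhat)
    (S : Matrix (Fin n) (Fin n) ℝ) (hS : S.PosSemidef)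
    (hSub : (σb • (1 : Matrix (Fin n) (Fin n) ℝ) - S).PosSemidef)
    (U : Matrix (Fin n) (Fin n) ℝ) (hU : specNorm U ≤ γb)
    (H : Matrix (Fin p) (Fin n) ℝ) (hH : specNorm H ≤ hb)
    (D : Matrix (Fin p) (Fin p) ℝ) (hDdiag : D.IsDiag) (hD : specNorm D ≤ βb)
    (R : Matrix (Fin p) (Fin p) ℝ)
    (hR : (R - rhat • (1 : Matrix (Fin p) (Fin p) ℝ)).PosSemidef) :
    IsUnit (D * H * S * Hᵀ * D + R) ∧
      specNorm (S * U * Hᵀ * D * (D * H * S * Hᵀ * D + R)⁻¹) ≤ σb * γb * hb * βb / rhat := by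
  have hP : (D * H * S * Hᵀ * D).PosSemidef := by
    simpa [Matrix.mul_assoc, hDdiag.isSymm.eq] using hS.mul_mul_conjTranspose_same (D * H)
  have hM : (D * H * S * Hᵀ * D + R - rhat • 1).PosSemidef := by
    simpa only [add_sub_assoc] using hP.add hR
  refine ⟨(PosDef.of_posSemidef_sub_smul_one hrhat hM).isUnit, ?_⟩
  have hHt : ‖Hᵀ‖ ≤ hb := by
    rwa [← conjTranspose_eq_transpose_of_trivial, l2_opNorm_conjTranspose]
  calc ‖S * U * Hᵀ * D * (D * H * S * Hᵀ * D + R)⁻¹‖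
      ≤ ‖S‖ * ‖U‖ * ‖Hᵀ‖ * ‖D‖ * ‖(D * H * S * Hᵀ * D + R)⁻¹‖ := by
        grw [l2_opNorm_mul, l2_opNorm_mul, l2_opNorm_mul, l2_opNorm_mul]
    _ ≤ σb * γb * hb * βb * rhat⁻¹ := by
        gcongr
        exacts [l2_opNorm_le_of_posSemidef_smul_one_sub hσb.le hS hSub, hU, hD,
          l2_opNorm_inv_le_of_posSemidef_sub_smul_one hrhat hM]
    _ = σb * γb * hb * βb / rhat := (div_eq_mul_inv _ _).symm

/-- bound on the Kalman-type gain matrix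
`K = Σ U Hᵀ D (D H Σ Hᵀ D + R̂)⁻¹`. -/
theorem gain_matrix_bound {n p : ℕ} (hn : 0 < n) (hp : 0 < p)
    (σb γb hb βb rhat : ℝ)
    (hσb : 0 < σb) (hγb : 0 < γb) (hhb : 0 < hb) (hβb : 0 < βb) (hrhat : 0 < rhat)
    (S : Matrix (Fin n) (Fin n) ℝ) (hS : S.PosSemidef)
    (hSub : (σb • (1 : Matrix (Fin n) (Fin n) ℝ) - S).PosSemidef)
    (U : Matrix (Fin n) (Fin n) ℝ) (hU : specNorm U ≤ γb)
    (H : Matrix (Fin p) (Fin n) ℝ) (hH : specNorm H ≤ hb)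
    (D : Matrix (Fin p) (Fin p) ℝ) (hDdiag : D.IsDiag) (hD : specNorm D ≤ βb)
    (R : Matrix (Fin p) (Fin p) ℝ) (hRsymm : R.IsSymm)
    (hR : (R - rhat • (1 : Matrix (Fin p) (Fin p) ℝ)).PosSemidef) :
    IsUnit (D * H * S * Hᵀ * D + R) ∧
      specNorm (S * U * Hᵀ * D * (D * H * S * Hᵀ * D + R)⁻¹) ≤ σb * γb * hb * βb / rhat :=
  gain_matrix_bound_general σb γb hb βb rhat hσb hγb hhb hβb hrhat S hS hSub U hU H hH D hDdiag hD R
    hR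
end

section
/- Let n be a positive integer and σ̄, q̂, a > 0. Let Σ, Q̂ ∈ ℝ^{n×n} be symmetric with Σ positive definite, Σ ⪯ σ̄I, and Q̂ ⪰ q̂I, and let A ∈ ℝ^{n×n} be invertible with ‖A‖ ≤ a. Then AΣA^T + Q̂ is positive definite and A^T (AΣA^T + Q̂)^{−1} A ⪯ (1 + q̂/(σ̄a²))^{−1} Σ^{−1}. -/
/-!
Since `‖A‖ ≤ a` and `Σ ⪯ σ̄ I`, we have `A Σ Aᵀ ⪯ σ̄ a² I`, so `Q̂ ⪰ q̂ I ⪰ (q̂ / (σ̄ a²)) A Σ Aᵀ`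
and hence `A Σ Aᵀ + Q̂ ⪰ c A Σ Aᵀ` with `c = 1 + q̂ / (σ̄ a²)`. Inversion reverses the Loewner
order on positive definite matrices, and conjugating `(c A Σ Aᵀ)⁻¹ = c⁻¹ A⁻ᵀ Σ⁻¹ A⁻¹` by `A`
leaves `c⁻¹ Σ⁻¹`.
-/

open Matrix

open scoped ComplexOrder

namespace Matrix

variable {𝕜 m n : Type*} [RCLike 𝕜] [Fintype m] [Fintype n]

lemma star_dotProduct_self_eq_norm_sq (x : n → 𝕜) :
    star x ⬝ᵥ x = (‖WithLp.toLp 2 x‖ : 𝕜) ^ 2 := by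
  rw [← inner_self_eq_norm_sq_to_K, EuclideanSpace.inner_eq_star_dotProduct, dotProduct_comm]

variable [DecidableEq m] [DecidableEq n]

open scoped Matrix.Norms.L2Operator

lemma posSemidef_sq_smul_one_sub_mul_conjTranspose {A : Matrix m n 𝕜} {a : ℝ} (hA : ‖A‖ ≤ a) :
    (a ^ 2 • (1 : Matrix m m 𝕜) - A * Aᴴ).PosSemidef := by
  refine PosSemidef.of_dotProduct_mulVec_nonneg
    ((PosSemidef.one.smul (sq_nonneg a)).isHermitian.sub (isHermitian_mul_conjTranspose_self A))
    fun x => ?_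
  have hnorm : ‖WithLp.toLp 2 (Aᴴ *ᵥ x)‖ ≤ a * ‖WithLp.toLp 2 x‖ :=
    (l2_opNorm_mulVec Aᴴ (WithLp.toLp 2 x)).trans <|
      mul_le_mul_of_nonneg_right ((l2_opNorm_conjTranspose A).trans_le hA) (norm_nonneg _)
  have hquad : star x ⬝ᵥ ((a ^ 2 • (1 : Matrix m m 𝕜) - A * Aᴴ) *ᵥ x) =
      ((a * ‖WithLp.toLp 2 x‖) ^ 2 - ‖WithLp.toLp 2 (Aᴴ *ᵥ x)‖ ^ 2 : ℝ) := by
    rw [sub_mulVec, smul_mulVec, one_mulVec, ← mulVec_mulVec, dotProduct_sub, dotProduct_smul,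
      dotProduct_mulVec, ← conjTranspose_conjTranspose A, ← star_mulVec,
      conjTranspose_conjTranspose, star_dotProduct_self_eq_norm_sq,
      star_dotProduct_self_eq_norm_sq, RCLike.real_smul_eq_coe_mul]
    push_cast
    ring
  rw [hquad, RCLike.ofReal_nonneg, sub_nonneg]
  exact pow_le_pow_left₀ (norm_nonneg _) hnorm 2

lemma posSemidef_mul_sq_smul_one_sub_mul_mul_conjTranspose {S : Matrix n n 𝕜} {A : Matrix m n 𝕜}
    {σ a : ℝ} (hσ : 0 ≤ σ) (hS : (σ • (1 : Matrix n n 𝕜) - S).PosSemidef) (hA : ‖A‖ ≤ a) :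
    ((σ * a ^ 2) • (1 : Matrix m m 𝕜) - A * S * Aᴴ).PosSemidef := by
  have hsplit : (σ * a ^ 2) • (1 : Matrix m m 𝕜) - A * S * Aᴴ =
      σ • (a ^ 2 • (1 : Matrix m m 𝕜) - A * Aᴴ) + A * (σ • (1 : Matrix n n 𝕜) - S) * Aᴴ := by
    rw [Matrix.mul_sub, Matrix.sub_mul, Matrix.mul_smul, Matrix.smul_mul, Matrix.mul_one, smul_sub,
      mul_smul]
    abel
  rw [hsplit]
  exact ((posSemidef_sq_smul_one_sub_mul_conjTranspose hA).smul hσ).add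
    (hS.mul_mul_conjTranspose_same A)

lemma PosDef.posSemidef_inv_sub_inv {A B : Matrix n n 𝕜} (hA : A.PosDef) (hB : B.PosDef)
    (hAB : (B - A).PosSemidef) : (A⁻¹ - B⁻¹).PosSemidef := by
  have hAd : IsUnit A.det := (isUnit_iff_isUnit_det A).mp hA.isUnit
  have hBd : IsUnit B.det := (isUnit_iff_isUnit_det B).mp hB.isUnit
  have hAs : (A⁻¹)ᴴ = A⁻¹ := by rw [conjTranspose_nonsing_inv, hA.1.eq]
  have hBs : (B⁻¹)ᴴ = B⁻¹ := by rw [conjTranspose_nonsing_inv, hB.1.eq]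
  have hsplit : A⁻¹ - B⁻¹ = (A⁻¹ - B⁻¹)ᴴ * A * (A⁻¹ - B⁻¹) + (B⁻¹)ᴴ * (B - A) * B⁻¹ := by
    rw [conjTranspose_sub, hAs, hBs]
    simp only [Matrix.sub_mul, Matrix.mul_sub, Matrix.mul_assoc, mul_nonsing_inv _ hAd,
      nonsing_inv_mul _ hAd, nonsing_inv_mul _ hBd, Matrix.mul_one, Matrix.one_mul]
    abel
  rw [hsplit]
  exact (hA.posSemidef.conjTranspose_mul_mul_same _).add (hAB.conjTranspose_mul_mul_same _)

lemma PosDef.posSemidef_inv_sub_conjTranspose_mul_inv_mul {S M A : Matrix n n 𝕜} (hS : S.PosDef)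
    (hA : IsUnit A) (hM : M.PosDef) (h : (M - A * S * Aᴴ).PosSemidef) :
    (S⁻¹ - Aᴴ * M⁻¹ * A).PosSemidef := by
  have hASA : (A * S * Aᴴ).PosDef :=
    hS.mul_mul_conjTranspose_same (vecMul_injective_iff_isUnit.mpr hA)
  have hAd : IsUnit A.det := (isUnit_iff_isUnit_det A).mp hA
  have hAHd : IsUnit Aᴴ.det := by rw [det_conjTranspose]; exact hAd.star
  have hcancel : Aᴴ * (A * S * Aᴴ)⁻¹ * A = S⁻¹ := by
    rw [Matrix.mul_inv_rev, Matrix.mul_inv_rev, ← Matrix.mul_assoc, mul_nonsing_inv _ hAHd,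
      Matrix.one_mul, Matrix.mul_assoc, nonsing_inv_mul _ hAd, Matrix.mul_one]
  rw [← hcancel, ← Matrix.sub_mul, ← Matrix.mul_sub]
  exact (hASA.posSemidef_inv_sub_inv hM h).conjTranspose_mul_mul_same A

end Matrix

theorem riccati_contraction_bound_general {n : ℕ}
    (σb qhat a : ℝ) (hσb : 0 < σb) (hqhat : 0 < qhat) (ha : 0 < a)
    (S Qh A : Matrix (Fin n) (Fin n) ℝ)
    (hS : S.PosDef) (hSub : (σb • (1 : Matrix (Fin n) (Fin n) ℝ) - S).PosSemidef)
    (hQ : (Qh - qhat • (1 : Matrix (Fin n) (Fin n) ℝ)).PosSemidef)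
    (hA : IsUnit A) (hAn : specNorm A ≤ a) :
    (A * S * Aᵀ + Qh).PosDef ∧
      ((1 + qhat / (σb * a ^ 2))⁻¹ • S⁻¹ - Aᵀ * (A * S * Aᵀ + Qh)⁻¹ * A).PosSemidef := by
  set c := 1 + qhat / (σb * a ^ 2)
  have hQh : Qh.PosSemidef := by simpa using hQ.add (PosSemidef.one.smul hqhat.le)
  have hASA : (A * S * Aᵀ).PosDef := by
    simpa using hS.mul_mul_conjTranspose_same (vecMul_injective_iff_isUnit.mpr hA)
  have hM := hASA.add_posSemidef hQh
  refine ⟨hM, ?_⟩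
  have hbound : ((σb * a ^ 2) • (1 : Matrix (Fin n) (Fin n) ℝ) - A * S * Aᵀ).PosSemidef := by
    -- `specNorm A` is by definition the L2 operator norm `‖A‖`
    simpa using posSemidef_mul_sq_smul_one_sub_mul_mul_conjTranspose hσb.le hSub hAn
  have hgap : (A * S * Aᵀ + Qh - A * (c • S) * Aᴴ).PosSemidef := by
    have hsplit : A * S * Aᵀ + Qh - A * (c • S) * Aᴴ = (Qh - qhat • 1) +
        (qhat / (σb * a ^ 2)) • ((σb * a ^ 2) • 1 - A * S * Aᵀ) := by
      rw [conjTranspose_eq_transpose_of_trivial, Matrix.mul_smul, Matrix.smul_mul]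
      unfold c
      match_scalars <;> field_simp <;> ring
    rw [hsplit]
    exact hQ.add (hbound.smul (by positivity))
  have hinv : (c • S)⁻¹ = c⁻¹ • S⁻¹ := inv_eq_left_inv <| by
    rw [smul_mul_smul, nonsing_inv_mul _ ((isUnit_iff_isUnit_det S).mp hS.isUnit),
      inv_mul_cancel₀ (by positivity), one_smul]
  simpa [hinv] using
    (hS.smul (by positivity : 0 < c)).posSemidef_inv_sub_conjTranspose_mul_inv_mul hA hM hgap

/-- `A Σ Aᵀ + Q̂` is positive definite and
`Aᵀ (A Σ Aᵀ + Q̂)⁻¹ A ⪯ (1 + q̂/(σ̄ a²))⁻¹ Σ⁻¹`. -/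
theorem riccati_contraction_bound {n : ℕ} (hn : 0 < n)
    (σb qhat a : ℝ) (hσb : 0 < σb) (hqhat : 0 < qhat) (ha : 0 < a)
    (S Qh A : Matrix (Fin n) (Fin n) ℝ)
    (hS : S.PosDef) (hSub : (σb • (1 : Matrix (Fin n) (Fin n) ℝ) - S).PosSemidef)
    (hQsymm : Qh.IsSymm)
    (hQ : (Qh - qhat • (1 : Matrix (Fin n) (Fin n) ℝ)).PosSemidef)
    (hA : IsUnit A) (hAn : specNorm A ≤ a) :
    (A * S * Aᵀ + Qh).PosDef ∧
      ((1 + qhat / (σb * a ^ 2))⁻¹ • S⁻¹ - Aᵀ * (A * S * Aᵀ + Qh)⁻¹ * A).PosSemidef :=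
  riccati_contraction_bound_general σb qhat a hσb hqhat ha S Qh A hS hSub hQ hA hAn
end

section
/- Let Σ ∈ ℝ^{n×n} and R ∈ ℝ^{p×p} be symmetric positive definite with Σ ⪯ σ̄I_n and r̲I_p ⪯ R, let H ∈ ℝ^{p×n} with ‖H‖ ≤ h̄, and define K := Σ H^T (H Σ H^T + R)^{−1}, with ‖K‖ ≤ k̄. Let U^x ∈ ℝ^{n×n} be invertible with ‖U^x‖ ≤ ᾱ, and let U^y ∈ ℝ^{p×p} with ‖U^y‖ ≤ β̄ be such that I_n − K U^y H is invertible. Then I_n − K H is invertible, the matrix Ū := (I_n − K U^y H) U^x (I_n − K H)^{−1} is invertible, it satisfies Ū (I_n − K H) F = (I_n − K U^y H) U^x F for every F ∈ ℝ^{n×n}, and ‖Ū‖ ≤ ᾱ(1 + k̄β̄h̄)(1 + σ̄h̄²/r̲). -/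
/-! By the Woodbury identity, the gain `K = Σ Hᵀ (H Σ Hᵀ + R)⁻¹` satisfies
`(I - K H)⁻¹ = I + Σ Hᵀ R⁻¹ H`, so `Ū` is a product of three invertible matrices. Its norm is
bounded by submultiplicativity: `‖Σ‖ ≤ σ̄` because the Rayleigh quotient of `Σ` lies in `[0, σ̄]`,
and `‖R⁻¹‖ ≤ 1 / r̲` because `r̲ ‖x‖² ≤ ⟪R x, x⟫ ≤ ‖R x‖ ‖x‖`. -/

open Matrix

namespace ContinuousLinearMap

variable {𝕜 E : Type*} [RCLike 𝕜] [NormedAddCommGroup E] [InnerProductSpace 𝕜 E]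

lemma reApplyInnerSelf_le_of_le {S T : E →L[𝕜] E} (h : S ≤ T) (x : E) :
    S.reApplyInnerSelf x ≤ T.reApplyInnerSelf x := by
  simpa [reApplyInnerSelf_apply, inner_sub_left] using h.2 x

lemma reApplyInnerSelf_smul_one (c : ℝ) (x : E) :
    ((c : 𝕜) • (1 : E →L[𝕜] E)).reApplyInnerSelf x = c * ‖x‖ ^ 2 := by
  simp [reApplyInnerSelf_apply, inner_smul_left, inner_self_eq_norm_sq_to_K]

lemma norm_le_of_nonneg_of_le_smul_one {T : E →L[𝕜] E} {c : ℝ} (hc : 0 ≤ c) (h0 : 0 ≤ T)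
    (hT : T ≤ (c : 𝕜) • 1) : ‖T‖ ≤ c := by
  rw [norm_eq_iSup_rayleighQuotient T (by simpa using h0.isSymmetric)]
  refine ciSup_le fun x => ?_
  have hlo : 0 ≤ T.reApplyInnerSelf x := by simpa using h0.2 x
  have hhi : T.reApplyInnerSelf x ≤ c * ‖x‖ ^ 2 :=
    (reApplyInnerSelf_le_of_le hT x).trans_eq (reApplyInnerSelf_smul_one c x)
  rw [abs_of_nonneg (div_nonneg hlo (by positivity))]
  exact div_le_of_le_mul₀ (by positivity) hc hhi

lemma mul_norm_le_norm_apply_of_smul_one_le {T : E →L[𝕜] E} {c : ℝ} (hT : (c : 𝕜) • 1 ≤ T)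
    (x : E) : c * ‖x‖ ≤ ‖T x‖ := by
  have hlo : c * ‖x‖ ^ 2 ≤ T.reApplyInnerSelf x :=
    (reApplyInnerSelf_smul_one c x).symm.trans_le (reApplyInnerSelf_le_of_le hT x)
  have hcs : T.reApplyInnerSelf x ≤ ‖T x‖ * ‖x‖ :=
    (RCLike.re_le_norm _).trans (norm_inner_le_norm _ _)
  rcases (norm_nonneg x).eq_or_lt with hx | hx
  · rw [← hx, mul_zero]
    exact norm_nonneg _
  · nlinarith

end ContinuousLinearMap

namespace Matrix

section Woodbury

variable {α : Type*} [CommRing α] {m n : Type*} [Fintype m] [DecidableEq m] [Fintype n]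
  [DecidableEq n]

lemma isUnit_one_sub_mul_inv_mul {G : Matrix n m α} {H : Matrix m n α} {R : Matrix m m α}
    (hR : IsUnit R) (hM : IsUnit (H * G + R)) :
    IsUnit (1 - G * (H * G + R)⁻¹ * H) ∧ (1 - G * (H * G + R)⁻¹ * H)⁻¹ = 1 + G * R⁻¹ * H := by
  set M := H * G + R with hM_def
  have key : M⁻¹ * (H * G) * R⁻¹ = R⁻¹ - M⁻¹ := by
    rw [show H * G = M - R by rw [hM_def, add_sub_cancel_right], Matrix.mul_sub, Matrix.sub_mul,
      nonsing_inv_mul _ ((isUnit_iff_isUnit_det M).1 hM), Matrix.one_mul, Matrix.mul_assoc,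
      mul_nonsing_inv _ ((isUnit_iff_isUnit_det R).1 hR), Matrix.mul_one]
  have hinv : (1 - G * M⁻¹ * H) * (1 + G * R⁻¹ * H) = 1 := by
    calc (1 - G * M⁻¹ * H) * (1 + G * R⁻¹ * H)
        = 1 + G * R⁻¹ * H - G * M⁻¹ * H - G * (M⁻¹ * (H * G) * R⁻¹) * H := by
          simp only [Matrix.sub_mul, Matrix.mul_add, Matrix.one_mul, Matrix.mul_one,
            Matrix.mul_assoc]
          abel
      _ = 1 := by
          rw [key, Matrix.mul_sub, Matrix.sub_mul]
          abel
  exact ⟨(isUnit_iff_isUnit_det _).2 (isUnit_det_of_right_inverse hinv), inv_eq_right_inv hinv⟩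

end Woodbury

open scoped Norms.L2Operator ComplexOrder

variable {𝕜 : Type*} [RCLike 𝕜] {m n : Type*} [Fintype m] [DecidableEq m] [Fintype n]
  [DecidableEq n]

lemma toEuclideanCLM_le_toEuclideanCLM_iff {A B : Matrix n n 𝕜} :
    toEuclideanCLM (n := n) (𝕜 := 𝕜) A ≤ toEuclideanCLM (n := n) (𝕜 := 𝕜) B ↔
      (B - A).PosSemidef := by
  rw [ContinuousLinearMap.le_def, ← map_sub, ← ContinuousLinearMap.isPositive_toLinearMap_iff,
    coe_toEuclideanCLM_eq_toEuclideanLin, isPositive_toEuclideanLin_iff]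

lemma toEuclideanCLM_smul_one (c : ℝ) :
    toEuclideanCLM (n := n) (𝕜 := 𝕜) ((c : 𝕜) • 1) = (c : 𝕜) • 1 := by
  rw [map_smul, map_one]

lemma l2_opNorm_one_le : ‖(1 : Matrix n n 𝕜)‖ ≤ 1 := by
  rw [cstar_norm_def, map_one]
  exact ContinuousLinearMap.norm_id_le

lemma l2_opNorm_one_add_le (A : Matrix n n 𝕜) : ‖1 + A‖ ≤ 1 + ‖A‖ :=
  (norm_add_le _ _).trans (by grw [l2_opNorm_one_le])

lemma l2_opNorm_one_sub_le (A : Matrix n n 𝕜) : ‖1 - A‖ ≤ 1 + ‖A‖ :=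
  (norm_sub_le _ _).trans (by grw [l2_opNorm_one_le])

lemma l2_opNorm_transpose (A : Matrix m n ℝ) : ‖Aᵀ‖ = ‖A‖ := by
  rw [← conjTranspose_eq_transpose_of_trivial, l2_opNorm_conjTranspose]

lemma l2_opNorm_le_of_posSemidef {A : Matrix n n 𝕜} {c : ℝ} (hc : 0 ≤ c) (hA : A.PosSemidef)
    (hAc : ((c : 𝕜) • 1 - A).PosSemidef) : ‖A‖ ≤ c := by
  rw [cstar_norm_def]
  refine ContinuousLinearMap.norm_le_of_nonneg_of_le_smul_one hc ?_ ?_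
  · rwa [← map_zero (toEuclideanCLM (n := n) (𝕜 := 𝕜)), toEuclideanCLM_le_toEuclideanCLM_iff,
      sub_zero]
  · rwa [← toEuclideanCLM_smul_one, toEuclideanCLM_le_toEuclideanCLM_iff]

lemma l2_opNorm_inv_le {A : Matrix n n 𝕜} (hA : IsUnit A) {c : ℝ} (hc : 0 < c)
    (hAc : (A - (c : 𝕜) • 1).PosSemidef) : ‖A⁻¹‖ ≤ c⁻¹ := by
  have hle : (c : 𝕜) • 1 ≤ toEuclideanCLM (n := n) (𝕜 := 𝕜) A := by
    rwa [← toEuclideanCLM_smul_one, toEuclideanCLM_le_toEuclideanCLM_iff]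
  rw [cstar_norm_def]
  refine ContinuousLinearMap.opNorm_le_bound _ (inv_nonneg.2 hc.le) fun x => ?_
  set y := toEuclideanCLM (n := n) (𝕜 := 𝕜) A⁻¹ x
  have hAy : toEuclideanCLM (n := n) (𝕜 := 𝕜) A y = x := by
    rw [← mul_apply_eq_comp, ← map_mul, mul_nonsing_inv _ ((isUnit_iff_isUnit_det A).1 hA),
      map_one, one_apply_eq_self]
  rw [inv_mul_eq_div, le_div_iff₀' hc, ← hAy]
  exact ContinuousLinearMap.mul_norm_le_norm_apply_of_smul_one_le hle y

end Matrix

open scoped Matrix.Norms.L2Operator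

lemma specNorm_eq_l2_opNorm {m n : ℕ} (A : Matrix (Fin m) (Fin n) ℝ) : specNorm A = ‖A‖ := rfl

section KalmanGain

variable {m n : Type*} [Fintype m] [Fintype n]

lemma posDef_mul_mul_transpose_add {S : Matrix n n ℝ} {H : Matrix m n ℝ} {R : Matrix m m ℝ}
    (hS : S.PosSemidef) (hR : R.PosDef) : (H * S * Hᵀ + R).PosDef := by
  rw [← conjTranspose_eq_transpose_of_trivial]
  exact PosDef.posSemidef_add (hS.mul_mul_conjTranspose_same H) hR

variable [DecidableEq m] [DecidableEq n]

noncomputable def kalmanGain (S : Matrix n n ℝ) (H : Matrix m n ℝ) (R : Matrix m m ℝ) :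
    Matrix n m ℝ :=
  S * Hᵀ * (H * S * Hᵀ + R)⁻¹

variable {S : Matrix n n ℝ} {H : Matrix m n ℝ} {R : Matrix m m ℝ}

lemma isUnit_one_sub_kalmanGain_mul_and_inv_eq (hS : S.PosSemidef) (hR : R.PosDef) :
    IsUnit (1 - kalmanGain S H R * H) ∧
      (1 - kalmanGain S H R * H)⁻¹ = 1 + S * Hᵀ * R⁻¹ * H := by
  have hM := (posDef_mul_mul_transpose_add (H := H) hS hR).isUnit
  rw [Matrix.mul_assoc H] at hM
  simpa only [kalmanGain, Matrix.mul_assoc] using isUnit_one_sub_mul_inv_mul hR.isUnit hM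

lemma l2_opNorm_inv_one_sub_kalmanGain_mul_le {σ r h : ℝ} (hS : S.PosSemidef) (hR : R.PosDef)
    (hσ : 0 ≤ σ) (hSσ : (σ • 1 - S).PosSemidef) (hr : 0 < r) (hRr : (R - r • 1).PosSemidef)
    (hH : ‖H‖ ≤ h) :
    ‖(1 - kalmanGain S H R * H)⁻¹‖ ≤ 1 + σ * h ^ 2 / r := by
  have hSn : ‖S‖ ≤ σ := l2_opNorm_le_of_posSemidef hσ hS (by simpa using hSσ)
  have hRn : ‖R⁻¹‖ ≤ r⁻¹ := l2_opNorm_inv_le hR.isUnit hr (by simpa using hRr)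
  have hh : 0 ≤ h := (norm_nonneg H).trans hH
  rw [(isUnit_one_sub_kalmanGain_mul_and_inv_eq hS hR).2]
  calc ‖1 + S * Hᵀ * R⁻¹ * H‖ ≤ 1 + ‖S‖ * ‖Hᵀ‖ * ‖R⁻¹‖ * ‖H‖ := by
        grw [l2_opNorm_one_add_le, l2_opNorm_mul, l2_opNorm_mul, l2_opNorm_mul]
    _ ≤ 1 + σ * h * r⁻¹ * h := by
        rw [l2_opNorm_transpose]
        gcongr
    _ = 1 + σ * h ^ 2 / r := by ring

end KalmanGain

theorem inverse_instrumental_matrix_general {n p : ℕ}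
    (σb rlo hb kb αb βb : ℝ)
    (hσb : 0 < σb) (hrlo : 0 < rlo)
    (S : Matrix (Fin n) (Fin n) ℝ) (R : Matrix (Fin p) (Fin p) ℝ)
    (hS : S.PosDef) (hR : R.PosDef)
    (hSub : (σb • (1 : Matrix (Fin n) (Fin n) ℝ) - S).PosSemidef)
    (hRlb : (R - rlo • (1 : Matrix (Fin p) (Fin p) ℝ)).PosSemidef)
    (H : Matrix (Fin p) (Fin n) ℝ) (hH : specNorm H ≤ hb)
    (K : Matrix (Fin n) (Fin p) ℝ)
    (hK : K = S * Hᵀ * (H * S * Hᵀ + R)⁻¹) (hKb : specNorm K ≤ kb)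
    (Ux : Matrix (Fin n) (Fin n) ℝ) (hUxinv : IsUnit Ux) (hUx : specNorm Ux ≤ αb)
    (Uy : Matrix (Fin p) (Fin p) ℝ) (hUy : specNorm Uy ≤ βb)
    (hIKUyH : IsUnit ((1 : Matrix (Fin n) (Fin n) ℝ) - K * Uy * H)) :
    IsUnit ((1 : Matrix (Fin n) (Fin n) ℝ) - K * H) ∧
      IsUnit (((1 : Matrix (Fin n) (Fin n) ℝ) - K * Uy * H) * Ux * (1 - K * H)⁻¹) ∧
      (∀ F : Matrix (Fin n) (Fin n) ℝ,
        ((1 : Matrix (Fin n) (Fin n) ℝ) - K * Uy * H) * Ux * (1 - K * H)⁻¹ * ((1 - K * H) * F)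
          = (1 - K * Uy * H) * Ux * F) ∧
      specNorm (((1 : Matrix (Fin n) (Fin n) ℝ) - K * Uy * H) * Ux * (1 - K * H)⁻¹)
        ≤ αb * (1 + kb * βb * hb) * (1 + σb * hb ^ 2 / rlo) := by
  simp only [specNorm_eq_l2_opNorm] at hH hKb hUx hUy ⊢
  obtain rfl : K = kalmanGain S H R := hK
  have hhb : 0 ≤ hb := (norm_nonneg H).trans hH
  have hkb : 0 ≤ kb := (norm_nonneg _).trans hKb
  have hαb : 0 ≤ αb := (norm_nonneg Ux).trans hUx
  have hβb : 0 ≤ βb := (norm_nonneg Uy).trans hUy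
  have hKH := (isUnit_one_sub_kalmanGain_mul_and_inv_eq (H := H) hS.posSemidef hR).1
  have hgain :=
    l2_opNorm_inv_one_sub_kalmanGain_mul_le hS.posSemidef hR hσb.le hSub hrlo hRlb hH
  have hnoise : ‖1 - kalmanGain S H R * Uy * H‖ ≤ 1 + kb * βb * hb := by
    grw [l2_opNorm_one_sub_le, l2_opNorm_mul, l2_opNorm_mul, hKb, hUy, hH]
  refine ⟨hKH, (hIKUyH.mul hUxinv).mul (isUnit_nonsing_inv_iff.2 hKH), fun F => ?_, ?_⟩
  · rw [Matrix.mul_assoc _ _⁻¹, nonsing_inv_mul_cancel_left _ _ ((isUnit_iff_isUnit_det _).1 hKH)]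
  · calc _ ≤ ‖1 - kalmanGain S H R * Uy * H‖ * ‖Ux‖ * ‖(1 - kalmanGain S H R * H)⁻¹‖ := by
          grw [l2_opNorm_mul, l2_opNorm_mul]
      _ ≤ (1 + kb * βb * hb) * αb * (1 + σb * hb ^ 2 / rlo) := by gcongr
      _ = αb * (1 + kb * βb * hb) * (1 + σb * hb ^ 2 / rlo) := by ring

/-- invertibility and bound for the I-EKF's unknown instrumental matrix
`Ū = (I − K Uʸ H) Uˣ (I − K H)⁻¹`, where `K = Σ Hᵀ (H Σ Hᵀ + R)⁻¹`. -/
theorem inverse_instrumental_matrix {n p : ℕ}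
    (σb rlo hb kb αb βb : ℝ)
    (hσb : 0 < σb) (hrlo : 0 < rlo) (hhb : 0 < hb) (hkb : 0 < kb) (hαb : 0 < αb)
    (hβb : 0 < βb)
    (S : Matrix (Fin n) (Fin n) ℝ) (R : Matrix (Fin p) (Fin p) ℝ)
    (hS : S.PosDef) (hR : R.PosDef)
    (hSub : (σb • (1 : Matrix (Fin n) (Fin n) ℝ) - S).PosSemidef)
    (hRlb : (R - rlo • (1 : Matrix (Fin p) (Fin p) ℝ)).PosSemidef)
    (H : Matrix (Fin p) (Fin n) ℝ) (hH : specNorm H ≤ hb)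
    (K : Matrix (Fin n) (Fin p) ℝ)
    (hK : K = S * Hᵀ * (H * S * Hᵀ + R)⁻¹) (hKb : specNorm K ≤ kb)
    (Ux : Matrix (Fin n) (Fin n) ℝ) (hUxinv : IsUnit Ux) (hUx : specNorm Ux ≤ αb)
    (Uy : Matrix (Fin p) (Fin p) ℝ) (hUy : specNorm Uy ≤ βb)
    (hIKUyH : IsUnit ((1 : Matrix (Fin n) (Fin n) ℝ) - K * Uy * H)) :
    IsUnit ((1 : Matrix (Fin n) (Fin n) ℝ) - K * H) ∧
      IsUnit (((1 : Matrix (Fin n) (Fin n) ℝ) - K * Uy * H) * Ux * (1 - K * H)⁻¹) ∧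
      (∀ F : Matrix (Fin n) (Fin n) ℝ,
        ((1 : Matrix (Fin n) (Fin n) ℝ) - K * Uy * H) * Ux * (1 - K * H)⁻¹ * ((1 - K * H) * F)
          = (1 - K * Uy * H) * Ux * F) ∧
      specNorm (((1 : Matrix (Fin n) (Fin n) ℝ) - K * Uy * H) * Ux * (1 - K * H)⁻¹)
        ≤ αb * (1 + kb * βb * hb) * (1 + σb * hb ^ 2 / rlo) :=
  inverse_instrumental_matrix_general σb rlo hb kb αb βb hσb hrlo S R hS hR hSub hRlb H hH K hK hKb
    Ux hUxinv hUx Uy hUy hIKUyH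
end
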